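/- Let b be a connected locally finite graph over (X,m), let S > 0, and suppose b is (√2·S)-regular. Define ρ_S(x,y) := sup{ρ(x,y) : ρ is an intrinsic pseudo-metric with jump size at most S}. Then √2 · ρ_S(x,y) ≥ ρ_ℰ(x,y) for all x, y ∈ X. -/

import Mathlib

/-!
Every admissible `ψ` (finitely supported, `‖Γ(ψ)‖_∞ ≤ 1`) yields the pseudo-metric
`ρ_ψ(u,v) = |ψ(u) − ψ(v)| / √2`. It is intrinsic because `Σ_v b(u,v) ρ_ψ(u,v)² = m(u) Γ(ψ)(u)`,
and its jump size is at most `S` by `(√2·S)`-regularity, so `|ψ(x) − ψ(y)| = √2 ρ_ψ(x,y) ≤ √2 ρ_S(x,y)`.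
Connectedness makes the supremum defining `ρ_S` finite: a path of `n` edges bounds every
admissible `ρ(x,y)` by `n S`.
-/

noncomputable section

/-- A pseudo-metric on the vertex set. -/
def IsPseudoMetric {X : Type*} (ρ : X → X → ℝ) : Prop :=
  (∀ x, ρ x x = 0) ∧ (∀ x y, 0 ≤ ρ x y) ∧ (∀ x y, ρ x y = ρ y x) ∧
    ∀ x y z, ρ x z ≤ ρ x y + ρ y z

/-- A pseudo-metric `ρ` is intrinsic if `Σ_y b(x,y) ρ(x,y)² ≤ m(x)` for all `x`. -/
def IsIntrinsic {X : Type*} (b : X → X → ℝ) (m : X → ℝ) (ρ : X → X → ℝ) : Prop :=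
  ∀ x, ∑' y, b x y * ρ x y ^ 2 ≤ m x

/-- The jump size of `ρ` is at most `S`. -/
def JumpLE {X : Type*} (b : X → X → ℝ) (ρ : X → X → ℝ) (S : ℝ) : Prop :=
  ∀ x y, 0 < b x y → ρ x y ≤ S

/-- The energy density `Γ(f)(x) = (1/(2m(x))) Σ_y b(x,y)(f(x) − f(y))²`. -/
def gammaDensity {X : Type*} (b : X → X → ℝ) (m : X → ℝ) (f : X → ℝ) (x : X) : ℝ :=
  (2 * m x)⁻¹ * ∑' y, b x y * (f x - f y) ^ 2

/-- A graph is `T`-regular if `|ψ(x) − ψ(y)| ≤ T` for all neighbors `x ~ y` and every finitely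
supported `ψ` with `‖Γ(ψ)‖_∞ ≤ 1`. -/
def SRegular {X : Type*} (b : X → X → ℝ) (m : X → ℝ) (T : ℝ) : Prop :=
  ∀ ψ : X → ℝ, (Function.support ψ).Finite → (∀ z, gammaDensity b m ψ z ≤ 1) →
    ∀ x y, 0 < b x y → |ψ x - ψ y| ≤ T

/-- `ρ_ℰ(x,y) = sup{|ψ(x) − ψ(y)| : ψ finitely supported, ‖Γ(ψ)‖_∞ ≤ 1}`. -/
def rhoE {X : Type*} (b : X → X → ℝ) (m : X → ℝ) (x y : X) : ℝ :=
  sSup {r | ∃ ψ : X → ℝ, (Function.support ψ).Finite ∧ (∀ z, gammaDensity b m ψ z ≤ 1) ∧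
    r = |ψ x - ψ y|}

/-- `ρ_S(x,y)`: supremum of `ρ(x,y)` over all intrinsic pseudo-metrics with jump size at most
`S`. -/
def rhoS {X : Type*} (b : X → X → ℝ) (m : X → ℝ) (S : ℝ) (x y : X) : ℝ :=
  sSup {r | ∃ ρ : X → X → ℝ, IsPseudoMetric ρ ∧ IsIntrinsic b m ρ ∧ JumpLE b ρ S ∧ r = ρ x y}

section

variable {X : Type*} {b : X → X → ℝ} {m : X → ℝ} {S : ℝ}

theorem exists_forall_le_nsmul_of_reflTransGen {x y : X}
    (hxy : Relation.ReflTransGen (fun u v => 0 < b u v) x y) :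
    ∃ n : ℕ, ∀ ρ : X → X → ℝ, IsPseudoMetric ρ → JumpLE b ρ S → ρ x y ≤ n * S := by
  induction hxy with
  | refl => exact ⟨0, fun ρ hρ _ => by simp [hρ.1 x]⟩
  | @tail z w _ hzw ih =>
    obtain ⟨n, hn⟩ := ih
    refine ⟨n + 1, fun ρ hρ hjump => ?_⟩
    push_cast
    linarith [hρ.2.2.2 x z w, hn ρ hρ hjump, hjump z w hzw]

theorem le_rhoS (hconn : ∀ x y, Relation.ReflTransGen (fun u v => 0 < b u v) x y)
    {ρ : X → X → ℝ} (hρ : IsPseudoMetric ρ) (hint : IsIntrinsic b m ρ) (hjump : JumpLE b ρ S)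
    (x y : X) : ρ x y ≤ rhoS b m S x y := by
  obtain ⟨n, hn⟩ := exists_forall_le_nsmul_of_reflTransGen (S := S) (hconn x y)
  refine le_csSup ⟨n * S, ?_⟩ ⟨ρ, hρ, hint, hjump, rfl⟩
  rintro _ ⟨ρ', hρ', -, hjump', rfl⟩
  exact hn ρ' hρ' hjump'

theorem isPseudoMetric_abs_sub_div (ψ : X → ℝ) {c : ℝ} (hc : 0 ≤ c) :
    IsPseudoMetric fun u v => |ψ u - ψ v| / c := by
  refine ⟨fun u => by simp, fun u v => by positivity, fun u v => by simp only [abs_sub_comm], ?_⟩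
  intro u v w
  rw [← add_div]
  exact div_le_div_of_nonneg_right (abs_sub_le _ _ _) hc

theorem tsum_mul_abs_sub_div_sqrt_two_sq (ψ : X → ℝ) {u : X} (hu : m u ≠ 0) :
    ∑' v, b u v * (|ψ u - ψ v| / √2) ^ 2 = m u * gammaDensity b m ψ u := by
  have hterm : ∀ v, b u v * (|ψ u - ψ v| / √2) ^ 2 = b u v * (ψ u - ψ v) ^ 2 * 2⁻¹ := by
    intro v
    rw [div_pow, sq_abs, Real.sq_sqrt zero_le_two]
    ring
  simp only [hterm, tsum_mul_right, gammaDensity]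
  field_simp

theorem isIntrinsic_abs_sub_div_sqrt_two (hm : ∀ x, 0 < m x) {ψ : X → ℝ}
    (hΓ : ∀ z, gammaDensity b m ψ z ≤ 1) :
    IsIntrinsic b m fun u v => |ψ u - ψ v| / √2 := by
  intro u
  rw [tsum_mul_abs_sub_div_sqrt_two_sq ψ (hm u).ne']
  exact mul_le_of_le_one_right (hm u).le (hΓ u)

theorem jumpLE_abs_sub_div_sqrt_two (hreg : SRegular b m (√2 * S)) {ψ : X → ℝ}
    (hfin : (Function.support ψ).Finite) (hΓ : ∀ z, gammaDensity b m ψ z ≤ 1) :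
    JumpLE b (fun u v => |ψ u - ψ v| / √2) S := by
  intro u v huv
  rw [div_le_iff₀' (by positivity)]
  exact hreg ψ hfin hΓ u v huv

end

theorem stmt15_general {X : Type*}
    (b : X → X → ℝ) (m : X → ℝ)
    (hm_pos : ∀ x, 0 < m x)
    (hconn : ∀ x y, Relation.ReflTransGen (fun u v => 0 < b u v) x y)
    (S : ℝ)
    (hreg : SRegular b m (Real.sqrt 2 * S)) :
    ∀ x y : X, rhoE b m x y ≤ Real.sqrt 2 * rhoS b m S x y := by
  intro x y
  have hzero : gammaDensity b m 0 = 0 := by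
    ext z
    simp [gammaDensity]
  refine csSup_le ⟨0, 0, by simp, by simp [hzero], by simp⟩ ?_
  rintro _ ⟨ψ, hfin, hΓ, rfl⟩
  have hψ : |ψ x - ψ y| / √2 ≤ rhoS b m S x y :=
    le_rhoS hconn (isPseudoMetric_abs_sub_div ψ (Real.sqrt_nonneg 2))
      (isIntrinsic_abs_sub_div_sqrt_two hm_pos hΓ) (jumpLE_abs_sub_div_sqrt_two hreg hfin hΓ) x y
  rwa [div_le_iff₀' (by positivity)] at hψ

theorem stmt15 {X : Type*} [Countable X]
    (b : X → X → ℝ) (m : X → ℝ)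
    (hb_nonneg : ∀ x y, 0 ≤ b x y) (hb_symm : ∀ x y, b x y = b y x)
    (hb_loop : ∀ x, b x x = 0)
    (hlf : ∀ x, (Function.support (b x)).Finite)
    (hm_pos : ∀ x, 0 < m x)
    (hconn : ∀ x y, Relation.ReflTransGen (fun u v => 0 < b u v) x y)
    (S : ℝ) (hS : 0 < S)
    (hreg : SRegular b m (Real.sqrt 2 * S)) :
    ∀ x y : X, rhoE b m x y ≤ Real.sqrt 2 * rhoS b m S x y :=
  stmt15_general b m hm_pos hconn S hreg

end
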